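/- Let r ≥ 2 be an integer and c₀ > 0, C_r ≥ 0. Then there exists a constant C > 0, depending only on r, c₀ and C_r, with the following property. Let N be a positive integer, h = 1/N, and let δ > 0 satisfy c₀ δ < 1/2. Let χ : ℝ² → ℂ be such that for each θ the function ρ ↦ χ(ρ,θ) is C^r, vanishes for |ρ| ≥ c₀ δ, and satisfies |∂_ρ^r χ(ρ,θ)| ≤ C_r δ^{−r} for all (ρ,θ). Then for all θ ∈ [0,2π], all γ ∈ ℝ and all (m₁,m₂) ∈ ℤ² with |m₁| + |m₂| ≤ N/2, the radial quadrature error E := | ∫_ℝ χ(ρ,θ) exp(2πi ρ (m₁ cos θ + m₂ sin θ)) dρ − c(θ) h Σ_{q∈ℤ} χ(γ + q c(θ) h, θ) exp(2πi (γ + q c(θ) h)(m₁ cos θ + m₂ sin θ)) | satisfies E ≤ C δ^{1−r} h^r. -/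

import Mathlib

open Real MeasureTheory FourierTransform Filter Set Function

/-!
Poisson summation turns the sampling sum `s ∑_q u(γ + q s)`, `s = c(θ) h`, into
`∑_n 𝐞(γ n / s) û(n / s)`, whose `n = 0` term is the integral of `u`. Here `u` is the profile
`χ(·, θ)` modulated by `ω = m₁ cos θ + m₂ sin θ`, so `û(n / s) = χ̂(n / s - ω)`, and
`|m₁| + |m₂| ≤ N / 2` gives `|ω| ≤ 1 / (2 s)`: every sampled frequency with `n ≠ 0` lies at
distance at least `|n| / (2 s)` from the origin. Integrating by parts `r` times there,
`|χ̂| ≤ ‖∂_ρ^r χ‖₁ (s / |n|)^r ≤ 2 c₀ C_r δ^{1-r} s^r / n²`, and summing over `n ≠ 0` gives the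
bound.
-/

/-- The angle-dependent weight `c(θ) = min {1/|cos θ|, 1/|sin θ|}`, written as
`(max |cos θ| |sin θ|)⁻¹` (an identical value, avoiding division by zero). -/
noncomputable def cwt (θ : ℝ) : ℝ := (max |Real.cos θ| |Real.sin θ|)⁻¹

/-- The radial quadrature error
`E = |∫_ℝ χ(ρ,θ) e^{2πiρ(m₁cos θ+m₂sin θ)} dρ
      − c(θ)h Σ_{q∈ℤ} χ(γ+qc(θ)h,θ) e^{2πi(γ+qc(θ)h)(m₁cos θ+m₂sin θ)}|`. -/
noncomputable def radErr (χ : ℝ → ℝ → ℂ) (h θ γ : ℝ) (m₁ m₂ : ℤ) : ℝ :=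
  norm
    ((∫ ρ : ℝ, χ ρ θ *
        Complex.exp (2 * (π : ℂ) * Complex.I * ρ *
          ((m₁ : ℂ) * (Real.cos θ : ℂ) + (m₂ : ℂ) * (Real.sin θ : ℂ)))) -
      (cwt θ : ℂ) * (h : ℂ) * ∑' q : ℤ,
        χ (γ + q * (cwt θ * h)) θ *
          Complex.exp (2 * (π : ℂ) * Complex.I * ((γ + q * (cwt θ * h) : ℝ) : ℂ) *
            ((m₁ : ℂ) * (Real.cos θ : ℂ) + (m₂ : ℂ) * (Real.sin θ : ℂ))))

theorem HasCompactSupport.isBigO_cocompact_rpow {F : Type*} [NormedAddCommGroup F] {f : ℝ → F}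
    (hf : HasCompactSupport f) (b : ℝ) :
    f =O[cocompact ℝ] fun x => |x| ^ (-b) :=
  (Asymptotics.isBigO_zero _ _).congr'
    (mem_of_superset hf.compl_mem_cocompact fun _ hx =>
      (image_eq_zero_of_notMem_tsupport hx).symm)
    EventuallyEq.rfl

section Fourier

variable {E : Type*} [NormedAddCommGroup E] [NormedSpace ℂ E]

theorem support_iteratedDeriv_subset (f : ℝ → E) (n : ℕ) :
    support (iteratedDeriv n f) ⊆ tsupport f := fun x hx =>
  support_iteratedFDeriv_subset (𝕜 := ℝ) n fun h => hx (by simp [iteratedDeriv, h])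

theorem HasCompactSupport.iteratedDeriv {f : ℝ → E} (hf : HasCompactSupport f) (n : ℕ) :
    HasCompactSupport (iteratedDeriv n f) :=
  hf.mono' (support_iteratedDeriv_subset f n)

theorem Real.norm_fourier_le_integral_norm_iteratedDeriv_div {f : ℝ → E} {r : ℕ}
    (hf : ContDiff ℝ (r : ℕ∞) f) (hcs : HasCompactSupport f) {ξ : ℝ} (hξ : ξ ≠ 0) :
    ‖𝓕 f ξ‖ ≤ (∫ x, ‖iteratedDeriv r f x‖) / (2 * π * |ξ|) ^ r := by
  have hint (n : ℕ) (hn : (n : ℕ∞) ≤ r) : Integrable (iteratedDeriv n f) :=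
    (hf.continuous_iteratedDeriv n (by exact_mod_cast hn)).integrable_of_hasCompactSupport
      (hcs.iteratedDeriv n)
  rw [le_div_iff₀ (by positivity)]
  calc ‖𝓕 f ξ‖ * (2 * π * |ξ|) ^ r = ‖𝓕 (iteratedDeriv r f) ξ‖ := by
        rw [Real.fourier_iteratedDeriv hf hint le_rfl, norm_smul, norm_pow, mul_comm]
        simp [abs_of_pos pi_pos]
    _ ≤ ∫ x, ‖iteratedDeriv r f x‖ := VectorFourier.norm_fourierIntegral_le_integral_norm ..

theorem Real.fourier_fourierChar_smul (f : ℝ → E) (ω ξ : ℝ) :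
    𝓕 (fun x => 𝐞 (x * ω) • f x) ξ = 𝓕 f (ξ - ω) := by
  simp only [Real.fourier_real_eq, smul_smul, ← AddChar.map_add_eq_mul]
  congr with x
  ring_nf

theorem Real.fourier_comp_add_mul (u : ℝ → E) (γ : ℝ) {s : ℝ} (hs : 0 < s) (ξ : ℝ) :
    𝓕 (fun x => u (γ + x * s)) ξ = s⁻¹ • 𝐞 (γ * ξ / s) • 𝓕 u (ξ / s) := by
  set G : ℝ → E := fun y => 𝐞 (γ * ξ / s) • 𝐞 (-(y * (ξ / s))) • u y
  have hG (x : ℝ) : 𝐞 (-(x * ξ)) • u (γ + x * s) = G (γ + x * s) := by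
    simp only [G, smul_smul, ← AddChar.map_add_eq_mul]
    congr 2
    field_simp
    ring
  calc 𝓕 (fun x => u (γ + x * s)) ξ = ∫ x, G (γ + x * s) := by
        simp only [Real.fourier_real_eq, hG]
    _ = s⁻¹ • ∫ y, G y := by
        rw [Measure.integral_comp_mul_right (fun t => G (γ + t)), integral_add_left_eq_self,
          abs_of_pos (inv_pos.2 hs)]
    _ = s⁻¹ • 𝐞 (γ * ξ / s) • 𝓕 u (ξ / s) := by
        simp only [G, Circle.smul_def, integral_smul, Real.fourier_real_eq]

theorem Real.norm_fourier_int_div_sub_le {χ : ℝ → E} {r : ℕ} (hr : 2 ≤ r)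
    (hχ : ContDiff ℝ (r : ℕ∞) χ) (hcs : HasCompactSupport χ) {s ω : ℝ} (hs : 0 < s)
    (hω : |ω| ≤ 1 / (2 * s)) {n : ℤ} (hn : n ≠ 0) :
    ‖𝓕 χ (n / s - ω)‖ ≤ (∫ x, ‖iteratedDeriv r χ x‖) * s ^ r * ((n : ℝ) ^ 2)⁻¹ := by
  have hn1 : 1 ≤ |(n : ℝ)| := by exact_mod_cast Int.one_le_abs hn
  have hfreq : |(n : ℝ)| / s ≤ 2 * π * |n / s - ω| := by
    have hrev : |(n : ℝ)| / s - |ω| ≤ |n / s - ω| := by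
      simpa [abs_div, abs_of_pos hs] using abs_sub_abs_le_abs_sub ((n : ℝ) / s) ω
    have hhalf : 1 / (2 * s) ≤ |(n : ℝ)| / (2 * s) := by gcongr
    have htwice : |(n : ℝ)| / s = 2 * (|(n : ℝ)| / (2 * s)) := by ring
    nlinarith [pi_gt_three, abs_nonneg ((n : ℝ) / s - ω)]
  have hpow : (n : ℝ) ^ 2 / s ^ r ≤ (2 * π * |n / s - ω|) ^ r :=
    calc (n : ℝ) ^ 2 / s ^ r = |(n : ℝ)| ^ 2 / s ^ r := by rw [sq_abs]
      _ ≤ |(n : ℝ)| ^ r / s ^ r := by gcongr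
      _ = (|(n : ℝ)| / s) ^ r := (div_pow _ _ _).symm
      _ ≤ _ := by gcongr
  have hnz : (n : ℝ) / s - ω ≠ 0 := by
    intro h0
    rw [h0, abs_zero, mul_zero] at hfreq
    exact absurd hfreq (not_le.2 (by positivity))
  calc ‖𝓕 χ (n / s - ω)‖ ≤ (∫ x, ‖iteratedDeriv r χ x‖) / (2 * π * |n / s - ω|) ^ r :=
        Real.norm_fourier_le_integral_norm_iteratedDeriv_div hχ hcs hnz
    _ ≤ (∫ x, ‖iteratedDeriv r χ x‖) / ((n : ℝ) ^ 2 / s ^ r) := by gcongr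
    _ = (∫ x, ‖iteratedDeriv r χ x‖) * s ^ r * ((n : ℝ) ^ 2)⁻¹ := by
        rw [div_div_eq_mul_div, div_eq_mul_inv]

end Fourier

theorem Real.mul_tsum_comp_add_mul_eq_tsum_fourier {u : ℝ → ℂ} (hu : Continuous u)
    (hcs : HasCompactSupport u) (γ : ℝ) {s : ℝ} (hs : 0 < s)
    (hsum : Summable fun n : ℤ => ‖𝓕 u (n / s)‖) :
    (s : ℂ) * ∑' q : ℤ, u (γ + q * s) = ∑' n : ℤ, 𝐞 (γ * n / s) • 𝓕 u (n / s) := by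
  set g : ℝ → ℂ := fun x => u (γ + x * s)
  have hgc : Continuous g := by fun_prop
  have hgcs : HasCompactSupport g :=
    hcs.comp_homeomorph ((Homeomorph.mulRight₀ s hs.ne').trans (Homeomorph.addLeft γ))
  have hFg (n : ℤ) : 𝓕 g n = (s : ℂ)⁻¹ * (𝐞 (γ * n / s) • 𝓕 u (n / s)) := by
    rw [Real.fourier_comp_add_mul u γ hs, Complex.real_smul, Complex.ofReal_inv]
  have hFg_sum : Summable fun n : ℤ => 𝓕 g n := by
    refine Summable.of_norm_bounded (hsum.mul_left s⁻¹) fun n => ?_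
    simp [hFg, Circle.norm_smul, abs_of_pos hs]
  have hpoisson := Real.tsum_eq_tsum_fourier_of_rpow_decay_of_summable hgc one_lt_two
    (hgcs.isBigO_cocompact_rpow 2) hFg_sum 0
  simp only [zero_add, QuotientAddGroup.mk_zero, fourier_eval_zero, mul_one] at hpoisson
  rw [hpoisson, ← tsum_mul_left]
  congr with n
  rw [hFg, ← mul_assoc, mul_inv_cancel₀ (by exact_mod_cast hs.ne'), one_mul]

theorem Real.norm_integral_sub_mul_tsum_le {u : ℝ → ℂ} (hu : Continuous u)
    (hcs : HasCompactSupport u) (γ : ℝ) {s : ℝ} (hs : 0 < s) {K : ℝ}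
    (hK : ∀ n : ℤ, n ≠ 0 → ‖𝓕 u (n / s)‖ ≤ K * ((n : ℝ) ^ 2)⁻¹) :
    ‖(∫ x, u x) - s * ∑' q : ℤ, u (γ + q * s)‖ ≤ K * ∑' n : ℤ, ((n : ℝ) ^ 2)⁻¹ := by
  have hinv : HasSum (fun n : ℤ => ((n : ℝ) ^ 2)⁻¹) (∑' n : ℤ, ((n : ℝ) ^ 2)⁻¹) := by
    simpa [one_div] using ((summable_one_div_int_pow (p := 2)).2 one_lt_two).hasSum
  have hsum : Summable fun n : ℤ => ‖𝓕 u (n / s)‖ := by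
    refine (hinv.summable.mul_left K).of_norm_bounded_eventually ?_
    filter_upwards [(finite_singleton (0 : ℤ)).compl_mem_cofinite] with n hn
    simpa using hK n hn
  set a : ℤ → ℂ := fun n => 𝐞 (γ * n / s) • 𝓕 u (n / s)
  have ha0 : a 0 = ∫ x, u x := by simp [a, Real.fourier_real_eq]
  have ha : Summable a := hsum.of_norm_bounded fun n => (Circle.norm_smul _ _).le
  rw [Real.mul_tsum_comp_add_mul_eq_tsum_fourier hu hcs γ hs hsum, ha.tsum_eq_add_tsum_ite 0,
    ha0, sub_add_cancel_left, norm_neg]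
  refine tsum_of_norm_bounded (hinv.mul_left K) fun n => ?_
  rcases eq_or_ne n 0 with rfl | hn
  · simp
  · simpa [a, hn, Circle.norm_smul] using hK n hn

theorem Real.norm_integral_sub_mul_tsum_fourierChar_smul_le {χ : ℝ → ℂ} {r : ℕ} (hr : 2 ≤ r)
    (hχ : ContDiff ℝ (r : ℕ∞) χ) (hcs : HasCompactSupport χ) (γ : ℝ) {s ω : ℝ} (hs : 0 < s)
    (hω : |ω| ≤ 1 / (2 * s)) :
    ‖(∫ x, 𝐞 (x * ω) • χ x) - s * ∑' q : ℤ, 𝐞 ((γ + q * s) * ω) • χ (γ + q * s)‖ ≤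
      (∫ x, ‖iteratedDeriv r χ x‖) * s ^ r * ∑' n : ℤ, ((n : ℝ) ^ 2)⁻¹ := by
  refine Real.norm_integral_sub_mul_tsum_le (u := fun x => 𝐞 (x * ω) • χ x) ?_ hcs.smul_left γ hs
    fun n hn => ?_
  · have := hχ.continuous
    fun_prop
  · rw [Real.fourier_fourierChar_smul]
    exact Real.norm_fourier_int_div_sub_le hr hχ hcs hs hω hn

theorem integral_norm_le_of_support_subset_Icc {F : Type*} [NormedAddCommGroup F] {f : ℝ → F}
    {a b B : ℝ} (hab : a ≤ b) (hf : support f ⊆ Icc a b) (hB : ∀ x, ‖f x‖ ≤ B) :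
    ∫ x, ‖f x‖ ≤ B * (b - a) := by
  rw [← setIntegral_eq_integral_of_forall_compl_eq_zero (s := Icc a b)
    fun x hx => by simpa using notMem_subset hf hx]
  calc ∫ x in Icc a b, ‖f x‖ ≤ ‖∫ x in Icc a b, ‖f x‖‖ := le_abs_self _
    _ ≤ B * volume.real (Icc a b) :=
        norm_setIntegral_le_of_norm_le_const measure_Icc_lt_top fun x _ => by simpa using hB x
    _ = B * (b - a) := by rw [Real.volume_real_Icc_of_le hab]

theorem half_le_max_abs_cos_abs_sin (θ : ℝ) : 1 / 2 ≤ max |cos θ| |sin θ| := by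
  nlinarith [sin_sq_add_cos_sq θ, sq_abs (sin θ), sq_abs (cos θ), le_max_left |cos θ| |sin θ|,
    le_max_right |cos θ| |sin θ|, abs_nonneg (sin θ), abs_nonneg (cos θ)]

theorem cwt_pos (θ : ℝ) : 0 < cwt θ :=
  inv_pos.2 ((one_half_pos).trans_le (half_le_max_abs_cos_abs_sin θ))

theorem cwt_le_two (θ : ℝ) : cwt θ ≤ 2 := by
  calc cwt θ ≤ (1 / 2)⁻¹ := inv_anti₀ one_half_pos (half_le_max_abs_cos_abs_sin θ)
    _ = 2 := by norm_num

theorem abs_mul_cos_add_mul_sin_le {a b h : ℝ} (hh : 0 < h) (hab : |a| + |b| ≤ 1 / (2 * h))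
    (θ : ℝ) : |a * cos θ + b * sin θ| ≤ 1 / (2 * (cwt θ * h)) := by
  have hM : 0 < max |cos θ| |sin θ| := one_half_pos.trans_le (half_le_max_abs_cos_abs_sin θ)
  calc |a * cos θ + b * sin θ| ≤ |a| * |cos θ| + |b| * |sin θ| := by
        simpa only [abs_mul] using abs_add_le (a * cos θ) (b * sin θ)
    _ ≤ (|a| + |b|) * max |cos θ| |sin θ| := by
        nlinarith [le_max_left |cos θ| |sin θ|, le_max_right |cos θ| |sin θ|, abs_nonneg a,
          abs_nonneg b]
    _ ≤ 1 / (2 * h) * max |cos θ| |sin θ| := by gcongr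
    _ = 1 / (2 * (cwt θ * h)) := by rw [cwt]; field_simp

theorem radErr_eq (χ : ℝ → ℝ → ℂ) (h θ γ : ℝ) (m₁ m₂ : ℤ) :
    radErr χ h θ γ m₁ m₂ =
      ‖(∫ x, 𝐞 (x * (m₁ * cos θ + m₂ * sin θ)) • χ x θ) - (cwt θ * h : ℝ) *
        ∑' q : ℤ, 𝐞 ((γ + q * (cwt θ * h)) * (m₁ * cos θ + m₂ * sin θ)) •
          χ (γ + q * (cwt θ * h)) θ‖ := by
  have hphase (x : ℝ) : Complex.exp (2 * π * Complex.I * x * (m₁ * cos θ + m₂ * sin θ)) =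
      𝐞 (x * (m₁ * cos θ + m₂ * sin θ)) := by
    rw [Real.fourierChar_apply]
    push_cast
    ring_nf
  simp only [radErr, Circle.smul_def, smul_eq_mul, hphase, mul_comm (χ _ θ), Complex.ofReal_mul]

/-- For `r ≥ 2`, `c₀ > 0`, `C_r ≥ 0` there is `C > 0` such that for all
`N`, `h = 1/N`, `δ` with `c₀δ < 1/2`, all `χ` that are `C^r` in `ρ`, vanish for
`|ρ| ≥ c₀δ` and satisfy `|∂_ρ^r χ| ≤ C_r δ^{−r}`, all `θ ∈ [0,2π]`, `γ ∈ ℝ` and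
`(m₁,m₂)` with `|m₁|+|m₂| ≤ N/2`, the radial quadrature error is bounded by
`C δ^{1−r} h^r`. -/
theorem stmt6 (r : ℕ) (hr : 2 ≤ r) (c₀ Cr : ℝ) (hc₀ : 0 < c₀) (hCr : 0 ≤ Cr) :
    ∃ C > 0, ∀ N : ℕ, 0 < N → ∀ δ : ℝ, 0 < δ → c₀ * δ < 1 / 2 →
      ∀ χ : ℝ → ℝ → ℂ,
        (∀ θ : ℝ, ContDiff ℝ (r : ℕ∞) fun ρ => χ ρ θ) →
        (∀ ρ θ : ℝ, c₀ * δ ≤ |ρ| → χ ρ θ = 0) →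
        (∀ ρ θ : ℝ, norm (iteratedDeriv r (fun ρ' => χ ρ' θ) ρ) ≤ Cr / δ ^ r) →
        ∀ θ ∈ Set.Icc (0 : ℝ) (2 * π), ∀ γ : ℝ, ∀ m₁ m₂ : ℤ,
          ((|m₁| + |m₂| : ℤ) : ℝ) ≤ (N : ℝ) / 2 →
          radErr χ (1 / N) θ γ m₁ m₂ ≤ C * δ ^ ((1 : ℤ) - r) * (1 / N) ^ r := by
  set S := ∑' n : ℤ, ((n : ℝ) ^ 2)⁻¹
  have hS : 0 ≤ S := tsum_nonneg fun n => by positivity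
  refine ⟨2 ^ (r + 1) * c₀ * Cr * S + 1, by positivity, ?_⟩
  intro N hN δ hδ _ χ hχ hχ0 hχr θ _ γ m₁ m₂ hm
  have hh : (0 : ℝ) < 1 / N := by positivity
  have hsupp : tsupport (fun ρ => χ ρ θ) ⊆ Icc (-(c₀ * δ)) (c₀ * δ) :=
    closure_minimal (fun ρ hρ => abs_le.1 (not_le.1 (mt (hχ0 ρ θ) hρ)).le) isClosed_Icc
  have hI := integral_norm_le_of_support_subset_Icc (by nlinarith)
    ((support_iteratedDeriv_subset _ r).trans hsupp) (hχr · θ)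
  have hω := abs_mul_cos_add_mul_sin_le (a := m₁) (b := m₂) hh
    (by push_cast at hm; field_simp; linarith) θ
  rw [radErr_eq]
  calc _ ≤ (∫ x, ‖iteratedDeriv r (fun ρ => χ ρ θ) x‖) * (cwt θ * (1 / N)) ^ r * S :=
        Real.norm_integral_sub_mul_tsum_fourierChar_smul_le hr (hχ θ)
          (isCompact_Icc.of_isClosed_subset (isClosed_tsupport _) hsupp) γ
          (mul_pos (cwt_pos θ) hh) hω
    _ ≤ Cr / δ ^ r * (c₀ * δ - -(c₀ * δ)) * (2 * (1 / N)) ^ r * S := by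
        have hs := mul_pos (cwt_pos θ) hh
        gcongr
        exacts [(integral_nonneg fun _ => norm_nonneg _).trans hI, cwt_le_two θ]
    _ = 2 ^ (r + 1) * c₀ * Cr * S * δ ^ ((1 : ℤ) - r) * (1 / N) ^ r := by
        rw [zpow_sub₀ hδ.ne', zpow_one, zpow_natCast]
        ring
    _ ≤ _ := by gcongr; linarith
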